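/- For every (z,σ) ∈ ℝ^N ∖ {(0,0)} with z ≠ 0 one has Φ(∇_z ρ(z,σ)) = Φ⁰(z)^{2α+1} ρ(z,σ)^{-2α-1}, and for every (z,σ) ∈ ℝ^N ∖ {(0,0)} with σ ≠ 0 one has Ψ(∇_σ ρ(z,σ)) = 4(α+1) Ψ⁰(σ) ρ(z,σ)^{-2α-1}. -/

import Mathlib

/-!
`Φ⁰` is the support function of the compact unit sphere `{Φ = 1}`. For `z ≠ 0`, strict convexity
of `Φ²` makes the maximizing direction `ξ` unique, and Danskin's argument gives `∇Φ⁰(z) = ξ` with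
`Φ(ξ) = 1`. By the chain rule, `∇_z ρ` and `∇_σ ρ` are positive multiples of such unit vectors, so
by homogeneity of `Φ` and `Ψ` their norms are exactly those scalar factors.
-/

open Real MeasureTheory
open scoped RealInnerProductSpace

noncomputable section

abbrev Euc (n : ℕ) := EuclideanSpace ℝ (Fin n)

/-- A Minkowski norm on `ℝⁿ`: nonnegative, absolutely homogeneous, with `N²` of class `C²`
away from the origin and strictly convex. -/
def IsMinkowskiNorm {n : ℕ} (N : Euc n → ℝ) : Prop :=
  (∀ x, 0 ≤ N x) ∧ (∀ (l : ℝ) (x : Euc n), N (l • x) = |l| * N x) ∧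
  ContDiffOn ℝ 2 (fun x => (N x) ^ 2) {(0 : Euc n)}ᶜ ∧
  StrictConvexOn ℝ Set.univ (fun x => (N x) ^ 2)

/-- The Legendre transform (dual norm) `N⁰(x) = sup { ⟨x,ξ⟩ : N(ξ) = 1 }`. -/
def dualNorm {n : ℕ} (N : Euc n → ℝ) (x : Euc n) : ℝ :=
  sSup ((fun ξ => ⟪x, ξ⟫) '' {ξ | N ξ = 1})

variable {m k : ℕ}

/-- The dual anisotropic Minkowski gauge
`ρ(z,σ) = (Φ⁰(z)^{2(α+1)} + 4(α+1)²Ψ⁰(σ)²)^{1/(2(α+1))}`. -/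
def rho (α : ℝ) (Φ : Euc m → ℝ) (Ψ : Euc k → ℝ) (x : Euc m × Euc k) : ℝ :=
  (dualNorm Φ x.1 ^ (2 * (α + 1)) + 4 * (α + 1) ^ 2 * dualNorm Ψ x.2 ^ 2) ^ (1 / (2 * (α + 1)))

/-- Gradient in the `z` variables. -/
def gradZ (u : Euc m × Euc k → ℝ) (x : Euc m × Euc k) : Euc m :=
  gradient (fun z => u (z, x.2)) x.1

/-- Gradient in the `σ` variables. -/
def gradS (u : Euc m × Euc k → ℝ) (x : Euc m × Euc k) : Euc k :=
  gradient (fun σ => u (x.1, σ)) x.2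

/-- Divergence in the `z` variables. -/
def divZ (V : Euc m × Euc k → Euc m) (x : Euc m × Euc k) : ℝ :=
  ∑ i, fderiv ℝ (fun z => V (z, x.2) i) x.1 (EuclideanSpace.single i 1)

/-- Divergence in the `σ` variables. -/
def divS (V : Euc m × Euc k → Euc k) (x : Euc m × Euc k) : ℝ :=
  ∑ i, fderiv ℝ (fun σ => V (x.1, σ) i) x.2 (EuclideanSpace.single i 1)

/-- The Finsler Laplacian in the `z` variables, `Δ_Φ(u) = div_z(Φ(∇_z u) ∇Φ(∇_z u))`. -/
def finslerLapZ (Φ : Euc m → ℝ) (u : Euc m × Euc k → ℝ) (x : Euc m × Euc k) : ℝ :=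
  divZ (fun y => Φ (gradZ u y) • gradient Φ (gradZ u y)) x

/-- The Finsler Laplacian in the `σ` variables, `Δ_Ψ(u) = div_σ(Ψ(∇_σ u) ∇Ψ(∇_σ u))`. -/
def finslerLapS (Ψ : Euc k → ℝ) (u : Euc m × Euc k → ℝ) (x : Euc m × Euc k) : ℝ :=
  divS (fun y => Ψ (gradS u y) • gradient Ψ (gradS u y)) x

/-- The operator `𝓛_{α,p}`. -/
def Lop (α p : ℝ) (Φ : Euc m → ℝ) (Ψ : Euc k → ℝ) (u : Euc m × Euc k → ℝ)
    (x : Euc m × Euc k) : ℝ :=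
  divZ (fun y =>
      (Φ (gradZ u y) ^ 2 + dualNorm Φ y.1 ^ (2 * α) / 4 * Ψ (gradS u y) ^ 2) ^ ((p - 2) / 2) •
        (Φ (gradZ u y) • gradient Φ (gradZ u y))) x
  + divS (fun y =>
      (Φ (gradZ u y) ^ 2 + dualNorm Φ y.1 ^ (2 * α) / 4 * Ψ (gradS u y) ^ 2) ^ ((p - 2) / 2) •
        ((dualNorm Φ y.1 ^ (2 * α) / 4 * Ψ (gradS u y)) • gradient Ψ (gradS u y))) x

/-- The operator `𝓛_{α,2}(u) = Δ_Φ(u) + (Φ⁰(z)^{2α}/4) Δ_Ψ(u)`. -/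
def Lop2 (α : ℝ) (Φ : Euc m → ℝ) (Ψ : Euc k → ℝ) (u : Euc m × Euc k → ℝ)
    (x : Euc m × Euc k) : ℝ :=
  finslerLapZ Φ u x + dualNorm Φ x.1 ^ (2 * α) / 4 * finslerLapS Ψ u x

theorem IsCompact.exists_pos_forall_dist_lt_of_unique_max {X : Type*} [PseudoMetricSpace X]
    {K : Set X} (hK : IsCompact K) {f : X → ℝ} (hf : ContinuousOn f K) {ξ : X}
    (huniq : ∀ η ∈ K, f ξ ≤ f η → η = ξ) {ε : ℝ} (hε : 0 < ε) :
    ∃ t > 0, ∀ η ∈ K, f ξ - t < f η → dist η ξ < ε := by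
  rcases (K \ Metric.ball ξ ε).eq_empty_or_nonempty with hfar | hfar
  · refine ⟨1, one_pos, fun η hη _ => ?_⟩
    by_contra hη_far
    exact hfar.subset ⟨hη, hη_far⟩
  obtain ⟨η₀, ⟨hη₀K, hη₀_far⟩, hmax⟩ :=
    (hK.diff Metric.isOpen_ball).exists_isMaxOn hfar (hf.mono Set.sdiff_subset)
  have hlt : f η₀ < f ξ := by
    by_contra! hle
    exact hη₀_far (huniq η₀ hη₀K hle ▸ Metric.mem_ball_self hε)
  refine ⟨f ξ - f η₀, sub_pos.2 hlt, fun η hη hfη => ?_⟩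
  by_contra hη_far
  have : f η ≤ f η₀ := hmax (show η ∈ K \ Metric.ball ξ ε from ⟨hη, hη_far⟩)
  linarith

section Gradient

variable {E : Type*} [NormedAddCommGroup E] [InnerProductSpace ℝ E] [CompleteSpace E]

/- Danskin's theorem for the support function of a compact set: near `z` the maximizers
stay close to the unique maximizer `ξ`, which squeezes the increment between `⟪h, ξ⟫`
and `⟪h, ζ⟫` for a maximizer `ζ` at `z + h`. -/
theorem hasGradientAt_sSup_image_inner {K : Set E} (hK : IsCompact K) {z ξ : E} (hξ : ξ ∈ K)
    (huniq : ∀ η ∈ K, ⟪z, ξ⟫ ≤ ⟪z, η⟫ → η = ξ) :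
    HasGradientAt (fun w => sSup ((fun η => ⟪w, η⟫) '' K)) ξ z := by
  set s : E → ℝ := fun w => sSup ((fun η => ⟪w, η⟫) '' K)
  have hcont (w : E) : ContinuousOn (fun η => ⟪w, η⟫) K :=
    (continuous_const.inner continuous_id).continuousOn
  have le_s (w : E) {η : E} (hη : η ∈ K) : ⟪w, η⟫ ≤ s w :=
    le_csSup (hK.bddAbove_image (hcont w)) (Set.mem_image_of_mem _ hη)
  have attained (w : E) : ∃ ζ ∈ K, s w = ⟪w, ζ⟫ := hK.exists_sSup_image_eq ⟨ξ, hξ⟩ (hcont w)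
  have hsz : s z = ⟪z, ξ⟫ := by
    obtain ⟨ζ, hζ, hsζ⟩ := attained z
    rw [hsζ, huniq ζ hζ (hsζ ▸ le_s z hξ)]
  obtain ⟨R, hR, hKR⟩ := hK.isBounded.exists_pos_norm_le
  rw [hasGradientAt_iff_hasFDerivAt, hasFDerivAt_iff_isLittleO_nhds_zero,
    Asymptotics.isLittleO_iff]
  intro ε hε
  obtain ⟨t, ht, hnear⟩ := hK.exists_pos_forall_dist_lt_of_unique_max (hcont z) huniq hε
  filter_upwards [Metric.ball_mem_nhds (0 : E) (by positivity : 0 < t / (2 * R))] with h hh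
  rw [mem_ball_zero_iff, lt_div_iff₀ (by positivity)] at hh
  obtain ⟨ζ, hζ, hsζ⟩ := attained (z + h)
  have hζ_ge : ⟪z, ξ⟫ + ⟪h, ξ⟫ ≤ ⟪z, ζ⟫ + ⟪h, ζ⟫ := by
    have hle := le_s (z + h) hξ
    rwa [hsζ, inner_add_left, inner_add_left] at hle
  have hζ_le : ⟪z, ζ⟫ ≤ ⟪z, ξ⟫ := hsz ▸ le_s z hζ
  have hcs : |⟪h, ζ⟫ - ⟪h, ξ⟫| ≤ ‖h‖ * ‖ζ - ξ‖ := by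
    simpa only [inner_sub_right] using abs_real_inner_le_norm h (ζ - ξ)
  have hclose : ‖ζ - ξ‖ < ε := by
    have hζξ : ‖ζ - ξ‖ ≤ 2 * R := by linarith [norm_sub_le ζ ξ, hKR ζ hζ, hKR ξ hξ]
    rw [← dist_eq_norm]
    exact hnear ζ hζ (by nlinarith [abs_le.1 hcs, norm_nonneg h])
  rw [hsζ, hsz, InnerProductSpace.toDual_apply_apply, Real.norm_eq_abs, abs_le,
    inner_add_left, real_inner_comm h ξ]
  constructor
  · nlinarith [mul_nonneg hε.le (norm_nonneg h)]
  · nlinarith [abs_le.1 hcs, mul_le_mul_of_nonneg_left hclose.le (norm_nonneg h)]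

theorem apply_gradient_comp_eq_abs_mul {N : E → ℝ} (hN : ∀ (l : ℝ) x, N (l • x) = |l| * N x)
    {g : E → ℝ} {φ : ℝ → ℝ} {z ξ : E} {φ' : ℝ} (hg : HasGradientAt g ξ z)
    (hφ : HasDerivAt φ φ' (g z)) : N (gradient (φ ∘ g) z) = |φ'| * N ξ := by
  have hcomp : HasGradientAt (φ ∘ g) (φ' • ξ) z := by
    rw [hasGradientAt_iff_hasFDerivAt, map_smulₛₗ, conj_trivial]
    exact hφ.comp_hasFDerivAt z hg.hasFDerivAt
  rw [hcomp.gradient, hN]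

end Gradient

namespace IsMinkowskiNorm

variable {n : ℕ} {N : Euc n → ℝ}

theorem nonneg (hN : IsMinkowskiNorm N) (x : Euc n) : 0 ≤ N x := hN.1 x

theorem map_smul (hN : IsMinkowskiNorm N) (l : ℝ) (x : Euc n) : N (l • x) = |l| * N x :=
  hN.2.1 l x

theorem contDiffOn_sq (hN : IsMinkowskiNorm N) : ContDiffOn ℝ 2 (fun x => N x ^ 2) {0}ᶜ :=
  hN.2.2.1

theorem strictConvexOn_sq (hN : IsMinkowskiNorm N) :
    StrictConvexOn ℝ Set.univ (fun x => N x ^ 2) :=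
  hN.2.2.2

theorem map_zero (hN : IsMinkowskiNorm N) : N 0 = 0 := by
  simpa using hN.map_smul 0 0

theorem map_neg (hN : IsMinkowskiNorm N) (x : Euc n) : N (-x) = N x := by
  simpa using hN.map_smul (-1) x

theorem pos (hN : IsMinkowskiNorm N) {x : Euc n} (hx : x ≠ 0) : 0 < N x := by
  refine (hN.nonneg x).lt_of_ne fun hx0 => ?_
  have hne : x ≠ -x := fun h => hx <| by
    have h2 : (2 : ℝ) • x = 0 := by rw [two_smul]; nth_rewrite 2 [h]; exact add_neg_cancel x
    simpa using h2
  have hconv := hN.strictConvexOn_sq.2 (Set.mem_univ x) (Set.mem_univ (-x)) hne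
    (by norm_num : (0 : ℝ) < 1 / 2) (by norm_num : (0 : ℝ) < 1 / 2) (by norm_num)
  simp only [show (1 / 2 : ℝ) • x + (1 / 2 : ℝ) • -x = 0 by module, hN.map_zero, hN.map_neg,
    ← hx0, smul_eq_mul] at hconv
  norm_num at hconv

theorem map_inv_smul_self (hN : IsMinkowskiNorm N) {x : Euc n} (hx : x ≠ 0) :
    N ((N x)⁻¹ • x) = 1 := by
  rw [hN.map_smul, abs_inv, abs_of_pos (hN.pos hx), inv_mul_cancel₀ (hN.pos hx).ne']

theorem continuousOn (hN : IsMinkowskiNorm N) : ContinuousOn N {0}ᶜ := by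
  have hsq : ContinuousOn (fun x => N x ^ 2) {0}ᶜ := hN.contDiffOn_sq.continuousOn
  simpa only [Real.sqrt_sq (hN.nonneg _)] using hsq.sqrt

theorem setOf_eq_one_eq_image (hN : IsMinkowskiNorm N) :
    {ξ | N ξ = 1} = (fun x => (N x)⁻¹ • x) '' Metric.sphere 0 1 := by
  ext ξ
  constructor
  · intro (hξ : N ξ = 1)
    have hξ0 : ξ ≠ 0 := fun h => by simp [h, hN.map_zero] at hξ
    have hnorm : 0 < ‖ξ‖ := norm_pos_iff.2 hξ0
    refine ⟨‖ξ‖⁻¹ • ξ, by simp [norm_smul, hnorm.ne'], ?_⟩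
    dsimp only
    rw [hN.map_smul, abs_inv, abs_norm, hξ, mul_one, inv_inv, smul_inv_smul₀ hnorm.ne']
  · rintro ⟨x, hx, rfl⟩
    exact hN.map_inv_smul_self (ne_zero_of_mem_unit_sphere ⟨x, hx⟩)

theorem isCompact_setOf_eq_one (hN : IsMinkowskiNorm N) : IsCompact {ξ | N ξ = 1} := by
  rw [hN.setOf_eq_one_eq_image]
  refine (isCompact_sphere 0 1).image_of_continuousOn (ContinuousOn.fun_smul ?_ continuousOn_id)
  exact (hN.continuousOn.mono fun x hx => ne_zero_of_mem_unit_sphere ⟨x, hx⟩).inv₀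
    fun x hx => (hN.pos (ne_zero_of_mem_unit_sphere ⟨x, hx⟩)).ne'

theorem inner_le_dualNorm (hN : IsMinkowskiNorm N) (z : Euc n) {η : Euc n} (hη : N η = 1) :
    ⟪z, η⟫ ≤ dualNorm N z :=
  le_csSup (hN.isCompact_setOf_eq_one.bddAbove_image
    (continuous_const.inner continuous_id).continuousOn) ⟨η, hη, rfl⟩

theorem dualNorm_nonneg (hN : IsMinkowskiNorm N) (z : Euc n) : 0 ≤ dualNorm N z := by
  rcases ({ξ | N ξ = 1} : Set (Euc n)).eq_empty_or_nonempty with hempty | ⟨η, hη⟩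
  · simp [dualNorm, hempty]
  have hle := hN.inner_le_dualNorm z hη
  have hle_neg := hN.inner_le_dualNorm z (show N (-η) = 1 from (hN.map_neg η).trans hη)
  rw [inner_neg_right] at hle_neg
  linarith

theorem dualNorm_pos (hN : IsMinkowskiNorm N) {z : Euc n} (hz : z ≠ 0) : 0 < dualNorm N z := by
  have hle := hN.inner_le_dualNorm z (hN.map_inv_smul_self hz)
  rw [real_inner_smul_right, real_inner_self_eq_norm_sq] at hle
  have hpos : 0 < (N z)⁻¹ * ‖z‖ ^ 2 := by
    have hNz := hN.pos hz
    have hz' := norm_pos_iff.2 hz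
    positivity
  linarith

theorem exists_inner_eq_dualNorm (hN : IsMinkowskiNorm N) {z : Euc n} (hz : z ≠ 0) :
    ∃ ξ, N ξ = 1 ∧ ⟪z, ξ⟫ = dualNorm N z := by
  obtain ⟨ξ, hξ, hsup⟩ := hN.isCompact_setOf_eq_one.exists_sSup_image_eq
    ⟨_, hN.map_inv_smul_self hz⟩ (f := fun ξ => ⟪z, ξ⟫)
    (continuous_const.inner continuous_id).continuousOn
  exact ⟨ξ, hξ, hsup.symm⟩

/- By strict convexity of `N²` the midpoint of two distinct maximizers has `N < 1`;
rescaled to the unit sphere it would beat the maximum. -/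
theorem eq_of_inner_eq_dualNorm (hN : IsMinkowskiNorm N) {z : Euc n} (hz : z ≠ 0)
    {ξ₁ ξ₂ : Euc n} (h₁ : N ξ₁ = 1) (h₂ : N ξ₂ = 1) (hz₁ : ⟪z, ξ₁⟫ = dualNorm N z)
    (hz₂ : ⟪z, ξ₂⟫ = dualNorm N z) : ξ₁ = ξ₂ := by
  by_contra hne
  set w := (1 / 2 : ℝ) • ξ₁ + (1 / 2 : ℝ) • ξ₂
  have hD := hN.dualNorm_pos hz
  have hzw : ⟪z, w⟫ = dualNorm N z := by
    simp only [w, inner_add_right, real_inner_smul_right, hz₁, hz₂]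
    ring
  have hw0 : w ≠ 0 := fun h => by rw [h, inner_zero_right] at hzw; linarith
  have hNw : 0 < N w := hN.pos hw0
  have hNw_lt : N w < 1 := by
    have hconv := hN.strictConvexOn_sq.2 (Set.mem_univ ξ₁) (Set.mem_univ ξ₂) hne
      (by norm_num : (0 : ℝ) < 1 / 2) (by norm_num : (0 : ℝ) < 1 / 2) (by norm_num)
    simp only [h₁, h₂, smul_eq_mul] at hconv
    nlinarith
  have hle := hN.inner_le_dualNorm z (hN.map_inv_smul_self hw0)
  rw [real_inner_smul_right, hzw] at hle
  have hinv : 1 < (N w)⁻¹ := (one_lt_inv₀ hNw).2 hNw_lt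
  nlinarith

theorem hasGradientAt_dualNorm (hN : IsMinkowskiNorm N) {z : Euc n} (hz : z ≠ 0) :
    ∃ ξ, N ξ = 1 ∧ HasGradientAt (dualNorm N) ξ z := by
  obtain ⟨ξ, hξ, hzξ⟩ := hN.exists_inner_eq_dualNorm hz
  refine ⟨ξ, hξ, hasGradientAt_sSup_image_inner hN.isCompact_setOf_eq_one hξ fun η hη hle => ?_⟩
  exact hN.eq_of_inner_eq_dualNorm hz hη hξ
    (le_antisymm (hN.inner_le_dualNorm z hη) (hzξ ▸ hle)) hzξ

end IsMinkowskiNorm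

section Gauge

variable {α : ℝ} {Φ : Euc m → ℝ} {Ψ : Euc k → ℝ}

theorem rho_rpow_neg_two_mul_sub_one (hα : -1 < α) {x : Euc m × Euc k}
    (hx : 0 ≤ dualNorm Φ x.1) :
    rho α Φ Ψ x ^ (-(2 * α) - 1) =
      (dualNorm Φ x.1 ^ (2 * (α + 1)) + 4 * (α + 1) ^ 2 * dualNorm Ψ x.2 ^ 2) ^
        (1 / (2 * (α + 1)) - 1) := by
  have hα' : α + 1 ≠ 0 := by linarith
  rw [rho, ← Real.rpow_mul (by positivity)]
  congr 1
  field_simp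
  ring

theorem apply_gradZ_rho (hα : -1 < α) (hΦ : IsMinkowskiNorm Φ) {x : Euc m × Euc k}
    (hz : x.1 ≠ 0) :
    Φ (gradZ (rho α Φ Ψ) x) = dualNorm Φ x.1 ^ (2 * α + 1) * rho α Φ Ψ x ^ (-(2 * α) - 1) := by
  obtain ⟨ξ, hξ, hgrad⟩ := hΦ.hasGradientAt_dualNorm hz
  have hp : 0 < α + 1 := by linarith
  have ha : 0 < dualNorm Φ x.1 := hΦ.dualNorm_pos hz
  have hG : 0 < dualNorm Φ x.1 ^ (2 * (α + 1)) + 4 * (α + 1) ^ 2 * dualNorm Ψ x.2 ^ 2 := by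
    positivity
  have hφ := ((hasDerivAt_rpow_const (p := 2 * (α + 1)) (Or.inl ha.ne')).add_const
    (4 * (α + 1) ^ 2 * dualNorm Ψ x.2 ^ 2)).rpow_const (p := 1 / (2 * (α + 1))) (Or.inl hG.ne')
  refine (apply_gradient_comp_eq_abs_mul hΦ.map_smul hgrad hφ).trans ?_
  rw [hξ, mul_one, rho_rpow_neg_two_mul_sub_one hα ha.le, abs_of_pos (by positivity),
    show 2 * (α + 1) - 1 = 2 * α + 1 by ring]
  field_simp

theorem apply_gradS_rho (hα : -1 < α) (hΦ : IsMinkowskiNorm Φ) (hΨ : IsMinkowskiNorm Ψ)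
    {x : Euc m × Euc k} (hσ : x.2 ≠ 0) :
    Ψ (gradS (rho α Φ Ψ) x) = 4 * (α + 1) * dualNorm Ψ x.2 * rho α Φ Ψ x ^ (-(2 * α) - 1) := by
  obtain ⟨η, hη, hgrad⟩ := hΨ.hasGradientAt_dualNorm hσ
  have hp : 0 < α + 1 := by linarith
  have hb : 0 < dualNorm Ψ x.2 := hΨ.dualNorm_pos hσ
  have hA : 0 ≤ dualNorm Φ x.1 := hΦ.dualNorm_nonneg x.1
  have hG : 0 < dualNorm Φ x.1 ^ (2 * (α + 1)) + 4 * (α + 1) ^ 2 * dualNorm Ψ x.2 ^ 2 := by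
    positivity
  have hφ := (((hasDerivAt_pow 2 (dualNorm Ψ x.2)).const_mul (4 * (α + 1) ^ 2)).const_add
    (dualNorm Φ x.1 ^ (2 * (α + 1)))).rpow_const (p := 1 / (2 * (α + 1))) (Or.inl hG.ne')
  refine (apply_gradient_comp_eq_abs_mul hΨ.map_smul hgrad hφ).trans ?_
  rw [hη, mul_one, rho_rpow_neg_two_mul_sub_one hα hA, abs_of_pos (by positivity)]
  field_simp
  ring

end Gauge

theorem norm_of_gradient_formulas_general (m k : ℕ) (α : ℝ) (hα : 0 < α)
    (Φ : Euc m → ℝ) (Ψ : Euc k → ℝ) (hΦ : IsMinkowskiNorm Φ) (hΨ : IsMinkowskiNorm Ψ) :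
    (∀ x : Euc m × Euc k, x ≠ 0 → x.1 ≠ 0 →
      Φ (gradZ (rho α Φ Ψ) x) = dualNorm Φ x.1 ^ (2 * α + 1) * rho α Φ Ψ x ^ (-(2 * α) - 1)) ∧
    (∀ x : Euc m × Euc k, x ≠ 0 → x.2 ≠ 0 →
      Ψ (gradS (rho α Φ Ψ) x) = 4 * (α + 1) * dualNorm Ψ x.2 * rho α Φ Ψ x ^ (-(2 * α) - 1)) :=
  have hα' : -1 < α := by linarith
  ⟨fun _ _ hz => apply_gradZ_rho hα' hΦ hz, fun _ _ hσ => apply_gradS_rho hα' hΦ hΨ hσ⟩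

/-- `Φ(∇_z ρ) = Φ⁰(z)^{2α+1} ρ^{-2α-1}` (for `z ≠ 0`) and
`Ψ(∇_σ ρ) = 4(α+1) Ψ⁰(σ) ρ^{-2α-1}` (for `σ ≠ 0`). -/
theorem norm_of_gradient_formulas (m k : ℕ) (hm : 1 ≤ m) (hk : 1 ≤ k) (α : ℝ) (hα : 0 < α)
    (Φ : Euc m → ℝ) (Ψ : Euc k → ℝ) (hΦ : IsMinkowskiNorm Φ) (hΨ : IsMinkowskiNorm Ψ) :
    (∀ x : Euc m × Euc k, x ≠ 0 → x.1 ≠ 0 →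
      Φ (gradZ (rho α Φ Ψ) x) = dualNorm Φ x.1 ^ (2 * α + 1) * rho α Φ Ψ x ^ (-(2 * α) - 1)) ∧
    (∀ x : Euc m × Euc k, x ≠ 0 → x.2 ≠ 0 →
      Ψ (gradS (rho α Φ Ψ) x) = 4 * (α + 1) * dualNorm Ψ x.2 * rho α Φ Ψ x ^ (-(2 * α) - 1)) :=
  norm_of_gradient_formulas_general m k α hα Φ Ψ hΦ hΨ
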